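/- In the FedAvg setup, fix a neuron h and a round t, and suppose the round-level activation set is a singleton: A^h_t = {x} for some x ∈ ℝ^d. Then ΔW^h_t = Δb^h_t · x. Consequently, if Δb^h_t ≠ 0, then x = ΔW^h_t / Δb^h_t, i.e., the isolated sample x is exactly recovered as the ratio of the aggregated weight update to the aggregated bias update for neuron h. -/

import Mathlib

noncomputable section

/-- Pre-activation `W^h · x + b^h` of neuron `h` on sample `x`. -/
def preact {d H : ℕ} (W : Fin H → Fin d → ℝ) (b : Fin H → ℝ) (x : Fin d → ℝ)
    (h : Fin H) : ℝ :=
  (∑ j, W h j * x j) + b h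

/-- Componentwise ReLU output of the first layer. -/
def reluVec {d H : ℕ} (W : Fin H → Fin d → ℝ) (b : Fin H → ℝ) (x : Fin d → ℝ) :
    Fin H → ℝ :=
  fun h => max (preact W b x h) 0

/-- `F_{φ,y}(z) = ℓ(f(φ, z), y)`. -/
def Floss {H r C : ℕ} {Y : Type*} (f : (Fin r → ℝ) → (Fin H → ℝ) → Fin C → ℝ)
    (l : (Fin C → ℝ) → Y → ℝ) (φ : Fin r → ℝ) (y : Y) (z : Fin H → ℝ) : ℝ :=
  l (f φ z) y

/-- Partial derivative of `F : ℝ^H → ℝ` in the `h`-th coordinate at `z`. -/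
def dFh {H : ℕ} (F : (Fin H → ℝ) → ℝ) (z : Fin H → ℝ) (h : Fin H) : ℝ :=
  fderiv ℝ F z (Pi.single h 1)

/-- The loss of the model `θ = (W, b, φ)` on the batch `B`:
`L(θ; B) = ∑_{(x,y) ∈ B} ℓ(f(φ, ReLU(W x + b)), y)`. -/
def batchLoss {d H r C : ℕ} {Y : Type*} (f : (Fin r → ℝ) → (Fin H → ℝ) → Fin C → ℝ)
    (l : (Fin C → ℝ) → Y → ℝ)
    (θ : (Fin H → Fin d → ℝ) × (Fin H → ℝ) × (Fin r → ℝ))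
    (B : Finset ((Fin d → ℝ) × Y)) : ℝ :=
  ∑ p ∈ B, Floss f l θ.2.2 p.2 (reluVec θ.1 θ.2.1 p.1)

open Classical in
/-- Batch-level activation set `A^h(θ, B)` of neuron `h`, as a finset of
sample/label pairs of the batch. -/
def activB {d H r C : ℕ} {Y : Type*} (f : (Fin r → ℝ) → (Fin H → ℝ) → Fin C → ℝ)
    (l : (Fin C → ℝ) → Y → ℝ)
    (θ : (Fin H → Fin d → ℝ) × (Fin H → ℝ) × (Fin r → ℝ))
    (B : Finset ((Fin d → ℝ) × Y)) (h : Fin H) : Finset ((Fin d → ℝ) × Y) :=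
  B.filter (fun p => 0 < preact θ.1 θ.2.1 p.1 h ∧
    dFh (Floss f l θ.2.2 p.2) (reluVec θ.1 θ.2.1 p.1) h ≠ 0)

/-- The gradient of a function on the parameter space, assembled coordinatewise
from directional derivatives. -/
def gradP {d H r : ℕ} (L : ((Fin H → Fin d → ℝ) × (Fin H → ℝ) × (Fin r → ℝ)) → ℝ)
    (θ : (Fin H → Fin d → ℝ) × (Fin H → ℝ) × (Fin r → ℝ)) :
    (Fin H → Fin d → ℝ) × (Fin H → ℝ) × (Fin r → ℝ) :=
  (fun h j => fderiv ℝ L θ (Pi.single h (Pi.single j 1), 0, 0),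
   fun h => fderiv ℝ L θ (0, Pi.single h 1, 0),
   fun s => fderiv ℝ L θ (0, 0, Pi.single s 1))

/-- Round-level activation set `A^h_t` of neuron `h`: the set of samples activating
neuron `h` at some local update of some client during the round. -/
def roundActiv {d H r C K : ℕ} {Y : Type*} (f : (Fin r → ℝ) → (Fin H → ℝ) → Fin C → ℝ)
    (l : (Fin C → ℝ) → Y → ℝ) (n : ℕ)
    (θ : Fin K → ℕ → ((Fin H → Fin d → ℝ) × (Fin H → ℝ) × (Fin r → ℝ)))
    (Bt : Fin K → ℕ → Finset ((Fin d → ℝ) × Y)) (h : Fin H) : Set (Fin d → ℝ) :=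
  {x | ∃ k, ∃ i < n, ∃ y, (x, y) ∈ activB f l (θ k i) (Bt k i) h}

/-!
For a fixed sample `x`, the quantity `W^h - b^h • x` is linear in the parameters. Away from the
kinks of the ReLU the first layer is locally linear, so the gradient of the batch loss has `h`-th
weight row `∑ ∂_h F · x'` and `h`-th bias entry `∑ ∂_h F`, both sums running over the activation
set of the batch; when every activating sample equals `x`, the row is the bias entry times `x`, so
the gradient is annihilated by `W^h - b^h • x`. Hence every local SGD step preserves this
quantity, and so does the averaging of the clients' models, being linear. Comparing its values at
`θ_{t-1}` and `θ_t` gives `ΔW^h_t = Δb^h_t • x`.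
-/

open Filter Topology

theorem fderiv_comp_prodMk_right_apply {𝕜 E F G : Type*} [NontriviallyNormedField 𝕜]
    [NormedAddCommGroup E] [NormedSpace 𝕜 E] [NormedAddCommGroup F] [NormedSpace 𝕜 F]
    [NormedAddCommGroup G] [NormedSpace 𝕜 G] {g : E × F → G} {a : E} {b : F}
    (hg : DifferentiableAt 𝕜 g (a, b)) (u : F) :
    fderiv 𝕜 (fun z => g (a, z)) b u = fderiv 𝕜 g (a, b) (0, u) :=
  DFunLike.congr_fun (hg.hasFDerivAt.comp b (hasFDerivAt_prodMk_right a b)).fderiv u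

theorem eq_apply_zero_of_forall_lt_succ_eq {α : Type*} (g : ℕ → α) {n : ℕ}
    (hg : ∀ i < n, g (i + 1) = g i) : g n = g 0 := by
  induction n with
  | zero => rfl
  | succ n ih => rw [hg n n.lt_succ_self, ih fun i hi => hg i (hi.trans n.lt_succ_self)]

theorem LinearMap.map_inv_natCast_smul_sum_of_forall_eq {𝕜 E F : Type*} [DivisionRing 𝕜]
    [CharZero 𝕜] [AddCommGroup E] [Module 𝕜 E] [AddCommGroup F] [Module 𝕜 F]
    (Q : E →ₗ[𝕜] F) {K : ℕ} (hK : K ≠ 0) (v : Fin K → E) {a : F} (hv : ∀ k, Q (v k) = a) :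
    Q ((K : 𝕜)⁻¹ • ∑ k, v k) = a := by
  rw [map_smul, map_sum, Finset.sum_congr rfl fun k _ => hv k, Finset.sum_const,
    Finset.card_fin, ← Nat.cast_smul_eq_nsmul 𝕜, smul_smul,
    inv_mul_cancel₀ (Nat.cast_ne_zero.2 hK), one_smul]

abbrev Params (d H r : ℕ) := (Fin H → Fin d → ℝ) × (Fin H → ℝ) × (Fin r → ℝ)

section ReLULayer

variable {d H r : ℕ}

def preactCLM (x : Fin d → ℝ) (h : Fin H) : Params d H r →L[ℝ] ℝ :=
  LinearMap.toContinuousLinearMap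
    { toFun := fun ψ => preact ψ.1 ψ.2.1 x h
      map_add' := fun ψ χ => by
        simp only [preact, Prod.fst_add, Prod.snd_add, Pi.add_apply, add_mul,
          Finset.sum_add_distrib]
        ring
      map_smul' := fun c ψ => by
        simp only [preact, Prod.smul_fst, Prod.smul_snd, Pi.smul_apply, smul_eq_mul,
          RingHom.id_apply, mul_assoc, Finset.mul_sum, mul_add] }

@[simp]
theorem preactCLM_apply (x : Fin d → ℝ) (h : Fin H) (ψ : Params d H r) :
    preactCLM x h ψ = preact ψ.1 ψ.2.1 x h :=
  rfl

def reluLin (θ : Params d H r) (x : Fin d → ℝ) : Params d H r →L[ℝ] (Fin H → ℝ) :=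
  ContinuousLinearMap.pi fun h => if 0 < preact θ.1 θ.2.1 x h then preactCLM x h else 0

theorem reluVec_eventuallyEq_reluLin (θ : Params d H r) (x : Fin d → ℝ)
    (hnd : ∀ h, preact θ.1 θ.2.1 x h ≠ 0) :
    (fun ψ : Params d H r => reluVec ψ.1 ψ.2.1 x) =ᶠ[𝓝 θ] reluLin θ x := by
  have hcont : ∀ h, ContinuousAt (fun ψ : Params d H r => preact ψ.1 ψ.2.1 x h) θ :=
    fun h => (preactCLM x h).continuous.continuousAt
  have hneuron : ∀ h, ∀ᶠ ψ in 𝓝 θ, reluVec ψ.1 ψ.2.1 x h = reluLin θ x ψ h := by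
    intro h
    rcases (hnd h).lt_or_gt with hneg | hpos
    · filter_upwards [(hcont h).eventually_lt continuousAt_const hneg] with ψ hψ
      simp [reluVec, reluLin, hneg.not_gt, hψ.le]
    · filter_upwards [continuousAt_const.eventually_lt (hcont h) hpos] with ψ hψ
      simp [reluVec, reluLin, hpos, hψ.le]
  filter_upwards [eventually_all.2 hneuron] with ψ hψ
  exact funext hψ

theorem hasFDerivAt_reluVec (θ : Params d H r) (x : Fin d → ℝ)
    (hnd : ∀ h, preact θ.1 θ.2.1 x h ≠ 0) :
    HasFDerivAt (fun ψ : Params d H r => reluVec ψ.1 ψ.2.1 x) (reluLin θ x) θ :=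
  (reluLin θ x).hasFDerivAt.congr_of_eventuallyEq (reluVec_eventuallyEq_reluLin θ x hnd)

theorem reluLin_neuron (θ : Params d H r) (x : Fin d → ℝ) (h : Fin H) (w : Fin d → ℝ) (β : ℝ) :
    reluLin θ x (Pi.single h w, Pi.single h β, 0) =
      Pi.single h (if 0 < preact θ.1 θ.2.1 x h then ∑ j, w j * x j + β else 0) := by
  funext h'
  simp only [reluLin, ContinuousLinearMap.pi_apply]
  by_cases hh : h' = h
  · subst hh
    split_ifs <;> simp [preact]
  · split_ifs <;> simp [preact, hh]

end ReLULayer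

section Loss

variable {d H r C : ℕ} {Y : Type*} (f : (Fin r → ℝ) → (Fin H → ℝ) → Fin C → ℝ)
  (l : (Fin C → ℝ) → Y → ℝ)

def outerLoss (y : Y) (q : (Fin r → ℝ) × (Fin H → ℝ)) : ℝ :=
  Floss f l q.1 y q.2

def sampleLoss (x : Fin d → ℝ) (y : Y) (ψ : Params d H r) : ℝ :=
  outerLoss f l y (ψ.2.2, reluVec ψ.1 ψ.2.1 x)

variable {f l}

theorem hasFDerivAt_sampleLoss (hF : ∀ y, Differentiable ℝ (outerLoss f l y))
    (θ : Params d H r) (x : Fin d → ℝ) (y : Y) (hnd : ∀ h, preact θ.1 θ.2.1 x h ≠ 0) :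
    HasFDerivAt (sampleLoss f l x y)
      ((fderiv ℝ (outerLoss f l y) (θ.2.2, reluVec θ.1 θ.2.1 x)).comp
        (((ContinuousLinearMap.snd ℝ _ _).comp (ContinuousLinearMap.snd ℝ _ _)).prod
          (reluLin θ x))) θ :=
  (hF y _).hasFDerivAt.comp θ (hasFDerivAt_snd.snd.prodMk (hasFDerivAt_reluVec θ x hnd))

theorem fderiv_sampleLoss_neuron (hF : ∀ y, Differentiable ℝ (outerLoss f l y))
    (θ : Params d H r) (x : Fin d → ℝ) (y : Y) (hnd : ∀ h, preact θ.1 θ.2.1 x h ≠ 0)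
    (h : Fin H) (w : Fin d → ℝ) (β : ℝ) :
    fderiv ℝ (sampleLoss f l x y) θ (Pi.single h w, Pi.single h β, 0) =
      if 0 < preact θ.1 θ.2.1 x h then
        dFh (Floss f l θ.2.2 y) (reluVec θ.1 θ.2.1 x) h * (∑ j, w j * x j + β)
      else 0 := by
  rw [(hasFDerivAt_sampleLoss hF θ x y hnd).fderiv, ContinuousLinearMap.comp_apply,
    ContinuousLinearMap.prod_apply, reluLin_neuron]
  simp only [ContinuousLinearMap.comp_apply, ContinuousLinearMap.coe_snd']
  rw [← fderiv_comp_prodMk_right_apply (hF y _)]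
  split_ifs
  · rw [dFh, mul_comm, ← smul_eq_mul, ← map_smul, ← Pi.single_smul', smul_eq_mul, mul_one]
    rfl
  · simp

theorem fderiv_batchLoss_neuron (hF : ∀ y, Differentiable ℝ (outerLoss f l y))
    (θ : Params d H r) (B : Finset ((Fin d → ℝ) × Y))
    (hnd : ∀ p ∈ B, ∀ h, preact θ.1 θ.2.1 p.1 h ≠ 0) (h : Fin H) (w : Fin d → ℝ) (β : ℝ) :
    fderiv ℝ (fun ψ => batchLoss f l ψ B) θ (Pi.single h w, Pi.single h β, 0) =
      ∑ p ∈ activB f l θ B h,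
        dFh (Floss f l θ.2.2 p.2) (reluVec θ.1 θ.2.1 p.1) h * (∑ j, w j * p.1 j + β) := by
  have hB : HasFDerivAt (fun ψ => batchLoss f l ψ B)
      (∑ p ∈ B, fderiv ℝ (sampleLoss f l p.1 p.2) θ) θ :=
    HasFDerivAt.fun_sum fun p hp =>
      (hasFDerivAt_sampleLoss hF θ p.1 p.2 (hnd p hp)).differentiableAt.hasFDerivAt
  rw [hB.fderiv, _root_.sum_apply, activB, Finset.sum_filter]
  refine Finset.sum_congr rfl fun p hp => ?_
  rw [fderiv_sampleLoss_neuron hF θ p.1 p.2 (hnd p hp)]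
  by_cases hd : dFh (Floss f l θ.2.2 p.2) (reluVec θ.1 θ.2.1 p.1) h = 0 <;> simp [hd]

theorem gradP_batchLoss_fst (hF : ∀ y, Differentiable ℝ (outerLoss f l y))
    (θ : Params d H r) (B : Finset ((Fin d → ℝ) × Y))
    (hnd : ∀ p ∈ B, ∀ h, preact θ.1 θ.2.1 p.1 h ≠ 0) (h : Fin H) :
    (gradP (fun ψ => batchLoss f l ψ B) θ).1 h =
      ∑ p ∈ activB f l θ B h, dFh (Floss f l θ.2.2 p.2) (reluVec θ.1 θ.2.1 p.1) h • p.1 := by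
  funext j
  simpa [gradP, Pi.single_apply] using fderiv_batchLoss_neuron hF θ B hnd h (Pi.single j 1) 0

theorem gradP_batchLoss_snd_fst (hF : ∀ y, Differentiable ℝ (outerLoss f l y))
    (θ : Params d H r) (B : Finset ((Fin d → ℝ) × Y))
    (hnd : ∀ p ∈ B, ∀ h, preact θ.1 θ.2.1 p.1 h ≠ 0) (h : Fin H) :
    (gradP (fun ψ => batchLoss f l ψ B) θ).2.1 h =
      ∑ p ∈ activB f l θ B h, dFh (Floss f l θ.2.2 p.2) (reluVec θ.1 θ.2.1 p.1) h := by
  simpa [gradP] using fderiv_batchLoss_neuron hF θ B hnd h 0 1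

end Loss

def neuronResidual {d H r : ℕ} (h : Fin H) (x : Fin d → ℝ) : Params d H r →ₗ[ℝ] (Fin d → ℝ) where
  toFun θ := θ.1 h - θ.2.1 h • x
  map_add' θ ψ := by simp only [Prod.fst_add, Prod.snd_add, Pi.add_apply, add_smul]; abel
  map_smul' c θ := by simp only [Prod.smul_fst, Prod.smul_snd, Pi.smul_apply, smul_eq_mul,
    RingHom.id_apply, smul_sub, mul_smul]

theorem neuronResidual_apply {d H r : ℕ} (h : Fin H) (x : Fin d → ℝ) (θ : Params d H r) :
    neuronResidual h x θ = θ.1 h - θ.2.1 h • x :=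
  rfl

theorem neuronResidual_gradP_batchLoss {d H r C : ℕ} {Y : Type*}
    {f : (Fin r → ℝ) → (Fin H → ℝ) → Fin C → ℝ} {l : (Fin C → ℝ) → Y → ℝ}
    (hF : ∀ y, Differentiable ℝ (outerLoss f l y)) (θ : Params d H r)
    (B : Finset ((Fin d → ℝ) × Y)) (hnd : ∀ p ∈ B, ∀ h, preact θ.1 θ.2.1 p.1 h ≠ 0)
    (h : Fin H) (x : Fin d → ℝ) (hx : ∀ p ∈ activB f l θ B h, p.1 = x) :
    neuronResidual h x (gradP (fun ψ => batchLoss f l ψ B) θ) = 0 := by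
  rw [neuronResidual_apply, gradP_batchLoss_fst hF θ B hnd, gradP_batchLoss_snd_fst hF θ B hnd,
    Finset.sum_smul, sub_eq_zero]
  exact Finset.sum_congr rfl fun p hp => by rw [hx p hp]

theorem stmt5_general {d H r C K : ℕ} {Y : Type*}
    (f : (Fin r → ℝ) → (Fin H → ℝ) → Fin C → ℝ)
    (l : (Fin C → ℝ) → Y → ℝ)
    (hf : Differentiable ℝ (fun q : (Fin r → ℝ) × (Fin H → ℝ) => f q.1 q.2))
    (hl : ∀ y, Differentiable ℝ (fun u => l u y))
    (n : ℕ) (η : ℝ)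
    (θprev : (Fin H → Fin d → ℝ) × (Fin H → ℝ) × (Fin r → ℝ))
    (Bt : Fin K → ℕ → Finset ((Fin d → ℝ) × Y))
    (θ : Fin K → ℕ → ((Fin H → Fin d → ℝ) × (Fin H → ℝ) × (Fin r → ℝ)))
    (hinit : ∀ k, θ k 0 = θprev)
    (hstep : ∀ k, ∀ i < n,
      θ k (i + 1) = θ k i - η • gradP (fun ψ => batchLoss f l ψ (Bt k i)) (θ k i))
    (hnd : ∀ k, ∀ i < n, ∀ h' : Fin H, ∀ p ∈ Bt k i,
      preact (θ k i).1 (θ k i).2.1 p.1 h' ≠ 0)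
    (θt : (Fin H → Fin d → ℝ) × (Fin H → ℝ) × (Fin r → ℝ))
    (hagg : θt = (K : ℝ)⁻¹ • ∑ k, θ k n)
    (h : Fin H) (x : Fin d → ℝ)
    (hsingle : roundActiv f l n θ Bt h = {x}) :
    θt.1 h - θprev.1 h = (θt.2.1 h - θprev.2.1 h) • x ∧
    (θt.2.1 h - θprev.2.1 h ≠ 0 →
      x = (θt.2.1 h - θprev.2.1 h)⁻¹ • (θt.1 h - θprev.1 h)) := by
  have hF : ∀ y, Differentiable ℝ (outerLoss f l y) := fun y => (hl y).comp hf
  -- the activation set is nonempty, so there is a client and `K ≠ 0`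
  obtain ⟨k₀, -⟩ : x ∈ roundActiv f l n θ Bt h := hsingle ▸ Set.mem_singleton x
  have hact : ∀ k, ∀ i < n, ∀ p ∈ activB f l (θ k i) (Bt k i) h, p.1 = x :=
    fun k i hi p hp => hsingle.subset ⟨k, i, hi, p.2, hp⟩
  have hlocal : ∀ k, neuronResidual h x (θ k n) = neuronResidual h x θprev := by
    intro k
    rw [← hinit k]
    refine eq_apply_zero_of_forall_lt_succ_eq (fun i => neuronResidual h x (θ k i)) fun i hi => ?_
    rw [hstep k i hi, map_sub, map_smul,
      neuronResidual_gradP_batchLoss hF _ _ (fun p hp h' => hnd k i hi h' p hp) h x (hact k i hi),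
      smul_zero, sub_zero]
  have hround : neuronResidual h x θt = neuronResidual h x θprev :=
    hagg ▸ (neuronResidual h x).map_inv_natCast_smul_sum_of_forall_eq k₀.pos.ne' _ hlocal
  have hΔ : θt.1 h - θprev.1 h = (θt.2.1 h - θprev.2.1 h) • x := by
    rw [sub_smul, sub_eq_sub_iff_sub_eq_sub]
    exact hround
  exact ⟨hΔ, fun hne => by rw [hΔ, inv_smul_smul₀ hne]⟩

theorem stmt5 {d H r C K : ℕ} {Y : Type*} (hK : 0 < K)
    (f : (Fin r → ℝ) → (Fin H → ℝ) → Fin C → ℝ)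
    (l : (Fin C → ℝ) → Y → ℝ)
    (hf : Differentiable ℝ (fun q : (Fin r → ℝ) × (Fin H → ℝ) => f q.1 q.2))
    (hl : ∀ y, Differentiable ℝ (fun u => l u y))
    (n : ℕ) (η : ℝ) (hη : 0 < η)
    (θprev : (Fin H → Fin d → ℝ) × (Fin H → ℝ) × (Fin r → ℝ))
    (D : Fin K → Finset ((Fin d → ℝ) × Y))
    (Bt : Fin K → ℕ → Finset ((Fin d → ℝ) × Y))
    (θ : Fin K → ℕ → ((Fin H → Fin d → ℝ) × (Fin H → ℝ) × (Fin r → ℝ)))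
    (hBD : ∀ k, ∀ i < n, Bt k i ⊆ D k)
    (hinj : ∀ k, ∀ i < n, ∀ p ∈ Bt k i, ∀ q ∈ Bt k i, p.1 = q.1 → p = q)
    (hinit : ∀ k, θ k 0 = θprev)
    (hstep : ∀ k, ∀ i < n,
      θ k (i + 1) = θ k i - η • gradP (fun ψ => batchLoss f l ψ (Bt k i)) (θ k i))
    (hnd : ∀ k, ∀ i < n, ∀ h' : Fin H, ∀ p ∈ Bt k i,
      preact (θ k i).1 (θ k i).2.1 p.1 h' ≠ 0)
    (θt : (Fin H → Fin d → ℝ) × (Fin H → ℝ) × (Fin r → ℝ))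
    (hagg : θt = (K : ℝ)⁻¹ • ∑ k, θ k n)
    (h : Fin H) (x : Fin d → ℝ)
    (hsingle : roundActiv f l n θ Bt h = {x}) :
    θt.1 h - θprev.1 h = (θt.2.1 h - θprev.2.1 h) • x ∧
    (θt.2.1 h - θprev.2.1 h ≠ 0 →
      x = (θt.2.1 h - θprev.2.1 h)⁻¹ • (θt.1 h - θprev.1 h)) :=
  stmt5_general f l hf hl n η θprev Bt θ hinit hstep hnd θt hagg h x hsingle
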